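/- Let T be a finite tree with a leaf x, and let T' be the tree obtained from T by adding a new path a-b-c on three vertices together with the edge joining a to x. Then T' is eternal distance-2 domination critical if and only if T is eternal distance-2 domination critical. -/

import Mathlib

/-! Attaching a pendant path `a b c` at a vertex `y` of a finite graph `H` raises `γ^∞_{all,2}`
by exactly one. An eternal family of `H` plus one guard on the path defends the new graph.
Conversely, every configuration of an eternal family of the new graph has a guard on the path
(`c` must be dominated), and moving all guards on the path to `y` and then dropping one guard at
`y` gives an eternal family of `H`.

For `T' = T + P₃` at the leaf `x`, the vertices `x`, `a`, `b` are cut vertices of `T'`,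
`T' - u ≅ (T - u) + P₃` at `x` for `u ≠ x`, and `T' - c ≅ (T - x) + P₃` at the neighbour of `x`.
So `γ(T')` and `γ(T' - v)` for every non-cut vertex `v` exceed the corresponding numbers for `T`
by one.
-/

open SimpleGraph

universe u v

namespace EternalDom

variable {V : Type u} {W : Type v}

/-- `x` is within distance `k` of `y` in `G` (in particular, a path between them exists). -/
def WithinDist (G : SimpleGraph V) (k : ℕ) (x y : V) : Prop :=
  G.Reachable x y ∧ G.dist x y ≤ k

/-- A multiset of guards is distance-`k` dominating: every vertex is within
distance `k` of some guard. -/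
def IsDistKDomMultiset (G : SimpleGraph V) (k : ℕ) (D : Multiset V) : Prop :=
  ∀ w : V, ∃ x ∈ D, WithinDist G k x w

/-- `F` is an eternal distance-`k` defence family of guard configurations of size `m`:
a nonempty family of distance-`k` dominating multisets, all of cardinality `m`, such that
for every configuration `D ∈ F` and every attacked vertex `w` there is a configuration
`D' ∈ F` containing `w` that is obtained from `D` by a matching (bijection) moving each
guard a distance of at most `k`. -/
def IsEternalFamily (G : SimpleGraph V) (k m : ℕ) (F : Set (Multiset V)) : Prop :=
  F.Nonempty ∧
    (∀ D ∈ F, Multiset.card D = m ∧ IsDistKDomMultiset G k D) ∧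
    (∀ D ∈ F, ∀ w : V, ∃ D' ∈ F, w ∈ D' ∧ Multiset.Rel (WithinDist G k) D D')

/-- The eternal distance-`k` domination number `γ^∞_{all,k}(G)`. -/
noncomputable def eternalNum (G : SimpleGraph V) (k : ℕ) : ℕ :=
  sInf {m | ∃ F : Set (Multiset V), IsEternalFamily G k m F}

/-- `x` dominates `w`: they are equal or adjacent. -/
def Dominates (G : SimpleGraph V) (x w : V) : Prop := w = x ∨ G.Adj x w

/-- A dominating set of vertices. -/
def IsDomSet (G : SimpleGraph V) (D : Set V) : Prop := ∀ w : V, ∃ x ∈ D, Dominates G x w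

/-- The domination number `γ(G)`. -/
noncomputable def domNum (G : SimpleGraph V) : ℕ :=
  sInf {n | ∃ D : Set V, IsDomSet G D ∧ D.ncard = n}

/-- A distance-`k` dominating set of vertices. -/
def IsDistKDomSet (G : SimpleGraph V) (k : ℕ) (D : Set V) : Prop :=
  ∀ w : V, ∃ x ∈ D, WithinDist G k x w

/-- The distance-`k` domination number `γ_k(G)`. -/
noncomputable def distDomNum (G : SimpleGraph V) (k : ℕ) : ℕ :=
  sInf {n | ∃ D : Set V, IsDistKDomSet G k D ∧ D.ncard = n}

/-- A leaf: a vertex of degree 1, i.e. with a unique neighbour. -/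
def IsLeafV (G : SimpleGraph V) (x : V) : Prop := ∃! y, G.Adj x y

/-- A stem: a vertex adjacent to at least one leaf. -/
def IsStem (G : SimpleGraph V) (x : V) : Prop := ∃ y, G.Adj x y ∧ IsLeafV G y

/-- `k`-leaves: a `0`-leaf is a leaf; for `k > 0`, `v` is a `k`-leaf iff `v` is adjacent to
some `(k-1)`-leaf and all but at most one of the neighbours of `v` are `t`-leaves for some
`t < k`. -/
def IsKLeaf (G : SimpleGraph V) : ℕ → V → Prop
  | 0, v => IsLeafV G v
  | (k + 1), v =>
      (∃ u, G.Adj v u ∧ IsKLeaf G k u) ∧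
        ∃ w : V, ∀ x : V, G.Adj v x → x ≠ w → ∃ t, ∃ _ : t ≤ k, IsKLeaf G t x
  termination_by k _ => k
  decreasing_by all_goals omega

/-- For a 2-leaf `v`, the set `L(v)`: the union of `L[u]` over all neighbours `u` of `v`
which are 0-leaves or 1-leaves, where for a 1-leaf `u`, `L[u]` consists of `u` and the leaves
adjacent to `u`. -/
def Lopen (G : SimpleGraph V) (v : V) : Set V :=
  {x | ∃ u, G.Adj v u ∧
    ((IsKLeaf G 0 u ∧ x = u) ∨
      (IsKLeaf G 1 u ∧ (x = u ∨ (G.Adj u x ∧ IsKLeaf G 0 x))))}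

/-- For a 2-leaf `v`, the set `L[v] = L(v) ∪ {v}`. -/
def Lclosed (G : SimpleGraph V) (v : V) : Set V := insert v (Lopen G v)

/-- A graph is eternal distance-2 domination critical if deleting any non-cut vertex
(one whose removal leaves the graph connected) strictly decreases the eternal
distance-2 domination number. -/
def EternalCritical (G : SimpleGraph V) : Prop :=
  ∀ x : V, (G.induce {y | y ≠ x}).Connected →
    eternalNum (G.induce {y | y ≠ x}) 2 < eternalNum G 2

/-- Attach a pendant path `x₁ x₂ … xₙ` on `n` new vertices to the vertex `y`,
via the edge `y x₁`. -/
def attachPath (G : SimpleGraph V) (y : V) (n : ℕ) : SimpleGraph (V ⊕ Fin n) :=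
  G.map Sum.inl ⊔ (pathGraph n).map Sum.inr ⊔
    fromEdgeSet {e | ∃ h : 0 < n, e = s(Sum.inl y, Sum.inr ⟨0, h⟩)}

/-- The star `K_{1,m}`: centre `0`, leaves the `m` nonzero elements of `Fin (m+1)`. -/
def starGraph (m : ℕ) : SimpleGraph (Fin (m + 1)) where
  Adj x y := (x = 0 ∧ y ≠ 0) ∨ (y = 0 ∧ x ≠ 0)
  symm := ⟨by tauto⟩
  loopless := ⟨by rintro x (⟨h1, h2⟩ | ⟨h1, h2⟩) <;> exact h2 h1⟩

/-- Disjoint union of `G` and the star `K_{1,m}` together with one edge joining the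
vertex `a` of the star to the vertex `y` of `G`. -/
def attachStar (G : SimpleGraph V) (y : V) (m : ℕ) (a : Fin (m + 1)) :
    SimpleGraph (V ⊕ Fin (m + 1)) :=
  G.map Sum.inl ⊔ (starGraph m).map Sum.inr ⊔
    fromEdgeSet {s(Sum.inl y, Sum.inr a)}

/-- From `G` and a vertex `v`: add a new star `K_{1,m}` joined by an edge from its centre
to `v`, together with `t` new leaves adjacent to `v`. -/
def addStarAndLeaves (G : SimpleGraph V) (v : V) (m t : ℕ) :
    SimpleGraph (V ⊕ (Fin (m + 1) ⊕ Fin t)) :=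
  G.map Sum.inl ⊔
    (starGraph m).map (Sum.inr ∘ Sum.inl) ⊔
    fromEdgeSet ({s(Sum.inl v, Sum.inr (Sum.inl 0))} ∪
      {e | ∃ i : Fin t, e = s(Sum.inl v, Sum.inr (Sum.inr i))})

/-- From `G` and a vertex `v`: add two new stars `K_{1,m}` and `K_{1,M}`, joining the
centre of each new star to `v` by an edge. -/
def addTwoStars (G : SimpleGraph V) (v : V) (m M : ℕ) :
    SimpleGraph (V ⊕ (Fin (m + 1) ⊕ Fin (M + 1))) :=
  G.map Sum.inl ⊔
    (starGraph m).map (Sum.inr ∘ Sum.inl) ⊔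
    (starGraph M).map (Sum.inr ∘ Sum.inr) ⊔
    fromEdgeSet {s(Sum.inl v, Sum.inr (Sum.inl 0)), s(Sum.inl v, Sum.inr (Sum.inr 0))}

/-- The 1-sum of `G` and `H` at the vertex `u` of `G` and the vertex `w` of `H`:
the disjoint union of `G` and `H` with `u` and `w` identified. -/
def oneSum (G : SimpleGraph V) (H : SimpleGraph W) (u : V) (w : W) :
    SimpleGraph (V ⊕ {x : W // x ≠ w}) where
  Adj x y :=
    match x, y with
    | Sum.inl a, Sum.inl b => G.Adj a b
    | Sum.inr a, Sum.inr b => H.Adj a.1 b.1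
    | Sum.inl a, Sum.inr b => a = u ∧ H.Adj w b.1
    | Sum.inr a, Sum.inl b => b = u ∧ H.Adj w a.1
  symm := ⟨by
    rintro (a | a) (b | b) h
    · exact h.symm
    · exact h
    · exact h
    · exact h.symm⟩
  loopless := ⟨by
    rintro (a | a) h
    · exact G.loopless.irrefl a h
    · exact H.loopless.irrefl a.1 h⟩


lemma withinDist_iff_exists_walk {G : SimpleGraph V} {k : ℕ} {a b : V} :
    WithinDist G k a b ↔ ∃ p : G.Walk a b, p.length ≤ k := by
  constructor
  · rintro ⟨hr, hd⟩
    obtain ⟨p, hp⟩ := hr.exists_walk_length_eq_dist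
    exact ⟨p, hp ▸ hd⟩
  · rintro ⟨p, hp⟩
    exact ⟨p.reachable, (dist_le p).trans hp⟩

lemma withinDist_refl (G : SimpleGraph V) (k : ℕ) (a : V) : WithinDist G k a a :=
  withinDist_iff_exists_walk.2 ⟨.nil, Nat.zero_le k⟩

lemma WithinDist.symm {G : SimpleGraph V} {k : ℕ} {a b : V} (h : WithinDist G k a b) :
    WithinDist G k b a :=
  ⟨h.1.symm, dist_comm (G := G) ▸ h.2⟩

lemma withinDist_two_iff {G : SimpleGraph V} {a b : V} :
    WithinDist G 2 a b ↔ a = b ∨ G.Adj a b ∨ ∃ c, G.Adj a c ∧ G.Adj c b := by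
  rw [withinDist_iff_exists_walk]
  constructor
  · rintro ⟨p, hp⟩
    match p, hp with
    | .nil, _ => exact .inl rfl
    | .cons h .nil, _ => exact .inr (.inl h)
    | .cons h (.cons h' .nil), _ => exact .inr (.inr ⟨_, h, h'⟩)
    | .cons _ (.cons _ (.cons _ _)), hp => simp at hp
  · rintro (rfl | h | ⟨c, h, h'⟩)
    · exact ⟨.nil, by simp⟩
    · exact ⟨.cons h .nil, by simp⟩
    · exact ⟨.cons h (.cons h' .nil), by simp⟩

lemma WithinDist.of_dominates {G : SimpleGraph V} {c a b : V} (ha : Dominates G c a)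
    (hb : Dominates G c b) : WithinDist G 2 a b := by
  rw [withinDist_two_iff]
  rcases ha with rfl | ha <;> rcases hb with rfl | hb
  · exact .inl rfl
  · exact .inr (.inl hb)
  · exact .inr (.inl ha.symm)
  · exact .inr (.inr ⟨c, ha.symm, hb⟩)

lemma Walk.exists_length_le_of_adj_or_eq {G : SimpleGraph V} {G' : SimpleGraph W} (f : V → W)
    (hf : ∀ ⦃a b⦄, G.Adj a b → G'.Adj (f a) (f b) ∨ f a = f b) {a b : V} (p : G.Walk a b) :
    ∃ q : G'.Walk (f a) (f b), q.length ≤ p.length := by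
  induction p with
  | nil => exact ⟨.nil, le_rfl⟩
  | cons h p ih =>
    obtain ⟨q, hq⟩ := ih
    rcases hf h with h' | h'
    · exact ⟨.cons h' q, by simpa using hq⟩
    · exact ⟨q.copy h'.symm rfl, by simp; omega⟩

lemma WithinDist.of_adj_or_eq {G : SimpleGraph V} {G' : SimpleGraph W} (f : V → W)
    (hf : ∀ ⦃a b⦄, G.Adj a b → G'.Adj (f a) (f b) ∨ f a = f b) {k : ℕ} {a b : V}
    (h : WithinDist G k a b) : WithinDist G' k (f a) (f b) := by
  obtain ⟨p, hp⟩ := withinDist_iff_exists_walk.1 h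
  obtain ⟨q, hq⟩ := Walk.exists_length_le_of_adj_or_eq f hf p
  exact withinDist_iff_exists_walk.2 ⟨q, hq.trans hp⟩

lemma WithinDist.map {G : SimpleGraph V} {G' : SimpleGraph W} (f : G →g G') {k : ℕ} {a b : V}
    (h : WithinDist G k a b) : WithinDist G' k (f a) (f b) :=
  h.of_adj_or_eq f fun _ _ hab => .inl (f.map_adj hab)

lemma withinDist_iso_iff {G : SimpleGraph V} {G' : SimpleGraph W} (e : G ≃g G') {k : ℕ}
    {a b : V} : WithinDist G' k (e a) (e b) ↔ WithinDist G k a b :=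
  ⟨fun h => by simpa using h.map e.symm.toHom, fun h => h.map e.toHom⟩

lemma exists_isEternalFamily [Finite V] (G : SimpleGraph V) (k : ℕ) :
    ∃ m F, IsEternalFamily G k m F := by
  have := Fintype.ofFinite V
  refine ⟨Fintype.card V, {Finset.univ.val}, Set.singleton_nonempty _, ?_, ?_⟩
  · rintro D rfl
    exact ⟨rfl, fun w => ⟨w, by simp, withinDist_refl G k w⟩⟩
  · rintro D rfl w
    exact ⟨_, rfl, by simp, Multiset.rel_refl_of_refl_on fun a _ => withinDist_refl G k a⟩

lemma eternalNum_le {G : SimpleGraph V} {k m : ℕ} {F : Set (Multiset V)}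
    (h : IsEternalFamily G k m F) : eternalNum G k ≤ m :=
  Nat.sInf_le ⟨F, h⟩

lemma exists_isEternalFamily_eternalNum [Finite V] (G : SimpleGraph V) (k : ℕ) :
    ∃ F, IsEternalFamily G k (eternalNum G k) F :=
  Nat.sInf_mem (exists_isEternalFamily G k)

lemma IsEternalFamily.map_iso {G : SimpleGraph V} {G' : SimpleGraph W} (e : G ≃g G') {k m : ℕ}
    {F : Set (Multiset V)} (hF : IsEternalFamily G k m F) :
    IsEternalFamily G' k m (Multiset.map e '' F) := by
  obtain ⟨hne, hdom, hdef⟩ := hF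
  refine ⟨hne.image _, ?_, ?_⟩
  · rintro _ ⟨D, hD, rfl⟩
    refine ⟨by simp [(hdom D hD).1], fun w => ?_⟩
    obtain ⟨a, ha, haw⟩ := (hdom D hD).2 (e.symm w)
    exact ⟨e a, Multiset.mem_map_of_mem e ha, by simpa using (withinDist_iso_iff e).2 haw⟩
  · rintro _ ⟨D, hD, rfl⟩ w
    obtain ⟨D', hD', hw, hDD'⟩ := hdef D hD (e.symm w)
    refine ⟨_, ⟨D', hD', rfl⟩, by simpa using Multiset.mem_map_of_mem e hw, ?_⟩
    exact Multiset.rel_map.2 (hDD'.mono fun _ _ _ _ h => (withinDist_iso_iff e).2 h)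

lemma eternalNum_congr {G : SimpleGraph V} {G' : SimpleGraph W} (e : G ≃g G') (k : ℕ) :
    eternalNum G k = eternalNum G' k :=
  congr_arg sInf <| Set.ext fun _ =>
    ⟨fun ⟨_, h⟩ => ⟨_, h.map_iso e⟩, fun ⟨_, h⟩ => ⟨_, h.map_iso e.symm⟩⟩

section attachPath

variable {H : SimpleGraph W} {y : W} {n : ℕ}

@[simp]
lemma attachPath_adj_inl_inl {u w : W} :
    (attachPath H y n).Adj (.inl u) (.inl w) ↔ H.Adj u w := by
  simpa [attachPath, map_adj', fromEdgeSet_adj, Sym2.eq_iff] using fun h => h.ne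

@[simp]
lemma attachPath_adj_inr_inr {i j : Fin n} :
    (attachPath H y n).Adj (.inr i) (.inr j) ↔ (pathGraph n).Adj i j := by
  simpa [attachPath, map_adj', fromEdgeSet_adj, Sym2.eq_iff] using fun h => h.ne

@[simp]
lemma attachPath_adj_inl_inr {u : W} {i : Fin n} :
    (attachPath H y n).Adj (.inl u) (.inr i) ↔ u = y ∧ (i : ℕ) = 0 := by
  simpa [attachPath, map_adj', fromEdgeSet_adj, Fin.ext_iff] using fun _ _ => i.pos

@[simp]
lemma attachPath_adj_inr_inl {u : W} {i : Fin n} :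
    (attachPath H y n).Adj (.inr i) (.inl u) ↔ u = y ∧ (i : ℕ) = 0 := by
  rw [adj_comm, attachPath_adj_inl_inr]

def attachPath.inlHom (H : SimpleGraph W) (y : W) (n : ℕ) : H →g attachPath H y n :=
  ⟨Sum.inl, attachPath_adj_inl_inl.2⟩

def collapsePath (y : W) : W ⊕ Fin n → W := Sum.elim id fun _ => y

lemma collapsePath_adj_or_eq ⦃a b : W ⊕ Fin n⦄ (h : (attachPath H y n).Adj a b) :
    H.Adj (collapsePath y a) (collapsePath y b) ∨ collapsePath y a = collapsePath y b := by
  rcases a with u | i <;> rcases b with w | j <;> simp_all [collapsePath]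

lemma dominates_collapsePath_of_withinDist_inr {z : W ⊕ Fin n} {i : Fin n}
    (h : WithinDist (attachPath H y n) 2 z (.inr i)) : Dominates H y (collapsePath y z) := by
  rcases z with w | j
  · rcases withinDist_two_iff.1 h with h | h | ⟨c | c, h, h'⟩ <;>
      simp_all [collapsePath, Dominates, H.adj_comm]
  · exact .inl rfl

lemma attachPath_connected_iff : (attachPath H y n).Connected ↔ H.Connected := by
  constructor
  · intro h
    refine (connected_iff _).2 ⟨fun u w => ?_, ⟨y⟩⟩
    obtain ⟨p⟩ := h.preconnected (.inl u) (.inl w)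
    obtain ⟨q, -⟩ := Walk.exists_length_le_of_adj_or_eq _ collapsePath_adj_or_eq p
    exact q.reachable
  · intro h
    have hpath : ∀ (i : ℕ) (hi : i < n), (attachPath H y n).Reachable (.inr ⟨i, hi⟩) (.inl y) := by
      intro i
      induction i with
      | zero => exact fun hi => Adj.reachable (by simp)
      | succ i ih =>
        exact fun hi => (Adj.reachable (by simp [pathGraph_adj])).trans (ih (by omega))
    have hroot : ∀ a, (attachPath H y n).Reachable a (.inl y) := by
      rintro (u | ⟨i, hi⟩)
      · exact (h.preconnected u y).map (attachPath.inlHom H y n)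
      · exact hpath i hi
    exact (connected_iff _).2 ⟨fun a b => (hroot a).trans (hroot b).symm, ⟨.inl y⟩⟩

lemma exists_eq_inr_of_withinDist_inr_two {z : W ⊕ Fin 3}
    (h : WithinDist (attachPath H y 3) 2 z (.inr 2)) : ∃ i, z = .inr i := by
  rcases z with w | i
  · exfalso
    rcases withinDist_two_iff.1 h with h | h | ⟨c | c, h, h'⟩
    · simp at h
    · simp at h
    · simp at h'
    · obtain ⟨-, hc⟩ := attachPath_adj_inl_inr.1 h
      simp [pathGraph_adj, hc] at h'
  · exact ⟨i, rfl⟩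

lemma withinDist_inr_inr (i j : Fin 3) : WithinDist (attachPath H y 3) 2 (.inr i) (.inr j) := by
  have hcentre : ∀ k : Fin 3, Dominates (attachPath H y 3) (.inr 1) (.inr k) := by
    intro k
    fin_cases k <;> simp [Dominates, pathGraph_adj]
  exact .of_dominates (hcentre i) (hcentre j)

theorem IsEternalFamily.addPendantPath {m : ℕ} {F : Set (Multiset W)}
    (hF : IsEternalFamily H 2 m F) :
    IsEternalFamily (attachPath H y 3) 2 (m + 1)
      {E | ∃ D ∈ F, ∃ i : Fin 3, E = .inr i ::ₘ D.map Sum.inl} := by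
  obtain ⟨⟨D₀, hD₀⟩, hdom, hdef⟩ := hF
  have hinl : ∀ {a b : W}, WithinDist H 2 a b →
      WithinDist (attachPath H y 3) 2 (.inl a) (.inl b) :=
    fun h => h.map (attachPath.inlHom H y 3)
  refine ⟨⟨_, D₀, hD₀, 0, rfl⟩, ?_, ?_⟩
  · rintro _ ⟨D, hD, i, rfl⟩
    refine ⟨by simp [(hdom D hD).1], ?_⟩
    rintro (w | j)
    · obtain ⟨u, hu, huw⟩ := (hdom D hD).2 w
      exact ⟨.inl u, by simp [hu], hinl huw⟩
    · exact ⟨.inr i, by simp, withinDist_inr_inr i j⟩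
  · rintro _ ⟨D, hD, i, rfl⟩ (w | j)
    · obtain ⟨D', hD', hw, hDD'⟩ := hdef D hD w
      refine ⟨_, ⟨D', hD', i, rfl⟩, by simp [hw], ?_⟩
      exact .cons (withinDist_refl _ 2 _) (Multiset.rel_map.2 (hDD'.mono fun _ _ _ _ => hinl))
    · refine ⟨_, ⟨D, hD, j, rfl⟩, by simp, ?_⟩
      exact .cons (withinDist_inr_inr i j)
        (Multiset.rel_refl_of_refl_on fun _ _ => withinDist_refl _ 2 _)

def projectGuards [DecidableEq W] (y : W) (D : Multiset (W ⊕ Fin 3)) : Multiset W :=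
  (D.map (collapsePath y)).erase y

lemma projectGuards_inr_cons [DecidableEq W] (i : Fin 3) (D : Multiset (W ⊕ Fin 3)) :
    projectGuards y (.inr i ::ₘ D) = D.map (collapsePath y) := by
  simp [projectGuards, collapsePath]

lemma exists_inr_mem_of_isDistKDomMultiset {D : Multiset (W ⊕ Fin 3)}
    (hD : IsDistKDomMultiset (attachPath H y 3) 2 D) : ∃ i, .inr i ∈ D := by
  obtain ⟨g, hg, hgc⟩ := hD (.inr 2)
  obtain ⟨i, rfl⟩ := exists_eq_inr_of_withinDist_inr_two hgc
  exact ⟨i, hg⟩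

lemma mem_projectGuards_of_inl_mem [DecidableEq W] {D : Multiset (W ⊕ Fin 3)} {u : W}
    (hD : IsDistKDomMultiset (attachPath H y 3) 2 D) (hu : .inl u ∈ D) :
    u ∈ projectGuards y D := by
  obtain ⟨i, hi⟩ := exists_inr_mem_of_isDistKDomMultiset hD
  obtain ⟨D', rfl⟩ := Multiset.exists_cons_of_mem hi
  rw [projectGuards_inr_cons]
  exact Multiset.mem_map_of_mem (collapsePath y)
    ((Multiset.mem_cons.1 hu).resolve_left Sum.inl_ne_inr)

/-- If no guard of `H` is close to `v`, the guard defending `v` and the guard that must stay on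
the pendant path are two distinct guards on the path, so a copy of `y` survives the projection. -/
lemma y_mem_projectGuards [DecidableEq W] {m : ℕ} {F : Set (Multiset (W ⊕ Fin 3))}
    (hF : IsEternalFamily (attachPath H y 3) 2 m F) {D : Multiset (W ⊕ Fin 3)} (hD : D ∈ F)
    {v : W} (hv : Dominates H y v)
    (hfar : ∀ u, .inl u ∈ D → ¬ WithinDist (attachPath H y 3) 2 (.inl u) (.inl v)) :
    y ∈ projectGuards y D := by
  obtain ⟨D₁, hD₁, hv₁, hDD₁⟩ := hF.2.2 D hD (.inl v)
  obtain ⟨j, hj⟩ := exists_inr_mem_of_isDistKDomMultiset (hF.2.1 D₁ hD₁).2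
  obtain ⟨D₁', rfl⟩ := Multiset.exists_cons_of_mem hv₁
  obtain ⟨D₁'', rfl⟩ := Multiset.exists_cons_of_mem (show .inr j ∈ D₁' by simpa using hj)
  obtain ⟨α, D', hα, hD'D₁', rfl⟩ := Multiset.rel_cons_right.1 hDD₁
  obtain ⟨β, D'', hβ, -, rfl⟩ := Multiset.rel_cons_right.1 hD'D₁'
  rcases α with u | i
  · exact absurd hα (hfar u (by simp))
  rcases β with u | i'
  · have hu : Dominates H y u := dominates_collapsePath_of_withinDist_inr hβ
    exact absurd ((WithinDist.of_dominates hu hv).map (attachPath.inlHom H y 3))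
      (hfar u (by simp))
  simp [projectGuards_inr_cons, collapsePath]

lemma isDistKDomMultiset_projectGuards [DecidableEq W] {m : ℕ}
    {F : Set (Multiset (W ⊕ Fin 3))}
    (hF : IsEternalFamily (attachPath H y 3) 2 m F) {D : Multiset (W ⊕ Fin 3)} (hD : D ∈ F) :
    IsDistKDomMultiset H 2 (projectGuards y D) := by
  intro v
  by_cases hnear : ∃ u, .inl u ∈ D ∧ WithinDist (attachPath H y 3) 2 (.inl u) (.inl v)
  · obtain ⟨u, hu, huv⟩ := hnear
    exact ⟨u, mem_projectGuards_of_inl_mem (hF.2.1 D hD).2 hu,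
      huv.of_adj_or_eq _ collapsePath_adj_or_eq⟩
  · obtain ⟨g | i, hg, hgv⟩ := (hF.2.1 D hD).2 (.inl v)
    · exact absurd ⟨g, hg, hgv⟩ hnear
    have hv : Dominates H y v := dominates_collapsePath_of_withinDist_inr hgv.symm
    exact ⟨y, y_mem_projectGuards hF hD hv fun u hu huv => hnear ⟨u, hu, huv⟩,
      .of_dominates (.inl rfl) hv⟩

lemma rel_projectGuards [DecidableEq W] {D D₁ : Multiset (W ⊕ Fin 3)}
    (hD : IsDistKDomMultiset (attachPath H y 3) 2 D)
    (hD₁ : IsDistKDomMultiset (attachPath H y 3) 2 D₁)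
    (h : Multiset.Rel (WithinDist (attachPath H y 3) 2) D D₁) :
    Multiset.Rel (WithinDist H 2) (projectGuards y D) (projectGuards y D₁) := by
  have hmap : ∀ {s t}, Multiset.Rel (WithinDist (attachPath H y 3) 2) s t →
      Multiset.Rel (WithinDist H 2) (s.map (collapsePath y)) (t.map (collapsePath y)) :=
    fun h => Multiset.rel_map.2 (h.mono fun _ _ _ _ h => h.of_adj_or_eq _ collapsePath_adj_or_eq)
  obtain ⟨i, hi⟩ := exists_inr_mem_of_isDistKDomMultiset hD
  obtain ⟨D', rfl⟩ := Multiset.exists_cons_of_mem hi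
  obtain ⟨u | i', D₁', hα, hD'D₁', rfl⟩ := Multiset.rel_cons_left.1 h
  swap
  · rw [projectGuards_inr_cons, projectGuards_inr_cons]
    exact hmap hD'D₁'
  -- the guard leaving the path for `u` is replaced on the path by some guard `β`
  obtain ⟨j, hj⟩ := exists_inr_mem_of_isDistKDomMultiset hD₁
  obtain ⟨D₁'', rfl⟩ := Multiset.exists_cons_of_mem (show .inr j ∈ D₁' by simpa using hj)
  obtain ⟨β, D'', hβ, hD''D₁'', rfl⟩ := Multiset.rel_cons_right.1 hD'D₁'
  have hproj :
      projectGuards y (.inl u ::ₘ .inr j ::ₘ D₁'') = u ::ₘ D₁''.map (collapsePath y) := by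
    by_cases huy : u = y <;> simp [projectGuards, collapsePath, huy]
  rw [projectGuards_inr_cons, Multiset.map_cons, hproj]
  exact .cons (.of_dominates (dominates_collapsePath_of_withinDist_inr hβ)
    (dominates_collapsePath_of_withinDist_inr hα.symm)) (hmap hD''D₁'')

theorem IsEternalFamily.projectPendantPath [DecidableEq W] {m : ℕ}
    {F : Set (Multiset (W ⊕ Fin 3))}
    (hF : IsEternalFamily (attachPath H y 3) 2 m F) :
    IsEternalFamily H 2 (m - 1) (projectGuards y '' F) := by
  refine ⟨hF.1.image _, ?_, ?_⟩
  · rintro _ ⟨D, hD, rfl⟩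
    refine ⟨?_, isDistKDomMultiset_projectGuards hF hD⟩
    obtain ⟨i, hi⟩ := exists_inr_mem_of_isDistKDomMultiset (hF.2.1 D hD).2
    obtain ⟨D', rfl⟩ := Multiset.exists_cons_of_mem hi
    simp [projectGuards_inr_cons, ← (hF.2.1 _ hD).1]
  · rintro _ ⟨D, hD, rfl⟩ v
    obtain ⟨D₁, hD₁, hv, hDD₁⟩ := hF.2.2 D hD (.inl v)
    exact ⟨_, ⟨D₁, hD₁, rfl⟩, mem_projectGuards_of_inl_mem (hF.2.1 D₁ hD₁).2 hv,
      rel_projectGuards (hF.2.1 D hD).2 (hF.2.1 D₁ hD₁).2 hDD₁⟩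

theorem eternalNum_attachPath_three [Finite W] (H : SimpleGraph W) (y : W) :
    eternalNum (attachPath H y 3) 2 = eternalNum H 2 + 1 := by
  classical
  obtain ⟨F, hF⟩ := exists_isEternalFamily_eternalNum H 2
  obtain ⟨F', hF'⟩ := exists_isEternalFamily_eternalNum (attachPath H y 3) 2
  have hpos : 1 ≤ eternalNum (attachPath H y 3) 2 := by
    obtain ⟨D, hD⟩ := hF'.1
    obtain ⟨i, hi⟩ := exists_inr_mem_of_isDistKDomMultiset (hF'.2.1 D hD).2
    rw [← (hF'.2.1 D hD).1]
    exact Multiset.card_pos_iff_exists_mem.2 ⟨_, hi⟩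
  have hle := eternalNum_le (hF.addPendantPath (y := y))
  have hge := eternalNum_le hF'.projectPendantPath
  omega

end attachPath

lemma fin_three_cases (k : Fin 3) : k = 0 ∨ k = 1 ∨ k = 2 := by
  fin_cases k <;> simp

def attachPathInduceNeInl (G : SimpleGraph V) {x u : V} (hxu : x ≠ u) (n : ℕ) :
    (attachPath G x n).induce {w | w ≠ .inl u} ≃g
      attachPath (G.induce {w | w ≠ u}) ⟨x, hxu⟩ n where
  toFun
    | ⟨.inl a, h⟩ => .inl ⟨a, fun h' => h (congrArg _ h')⟩
    | ⟨.inr i, _⟩ => .inr i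
  invFun
    | .inl a => ⟨.inl a.1, fun h => a.2 (Sum.inl_injective h)⟩
    | .inr i => ⟨.inr i, Sum.inr_ne_inl⟩
  left_inv := by rintro ⟨a | i, h⟩ <;> rfl
  right_inv := by rintro (a | i) <;> rfl
  map_rel_iff' := by
    rintro ⟨a | i, ha⟩ ⟨b | j, hb⟩ <;> simp [Subtype.ext_iff]

def attachPathInduceNeLast [DecidableEq V] (G : SimpleGraph V) {x y₀ : V}
    (hleaf : ∀ v, G.Adj x v ↔ v = y₀) (hy₀ : y₀ ≠ x) :
    (attachPath G x 3).induce {w | w ≠ .inr 2} ≃g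
      attachPath (G.induce {w | w ≠ x}) ⟨y₀, hy₀⟩ 3 where
  toFun
    | ⟨.inl a, _⟩ => if h : a = x then .inr 0 else .inl ⟨a, h⟩
    | ⟨.inr i, _⟩ => .inr (i + 1)
  invFun
    | .inl a => ⟨.inl a.1, Sum.inl_ne_inr⟩
    | .inr i => if h : i = 0 then ⟨.inl x, Sum.inl_ne_inr⟩
        else ⟨.inr (i - 1), by fin_cases i <;> simp_all⟩
  left_inv := by
    rintro ⟨a | i, h⟩
    · by_cases hax : a = x <;> simp [hax]
    · fin_cases i
      · rfl
      · rfl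
      · exact absurd rfl h
  right_inv := by
    rintro (⟨a, ha⟩ | i)
    · simp [show a ≠ x from ha]
    · fin_cases i <;> simp
  map_rel_iff' := by
    rintro ⟨a | i, ha⟩ ⟨b | j, hb⟩
    · by_cases hax : a = x <;> by_cases hbx : b = x <;> simp [hax, hbx, hleaf, G.adj_comm _ x]
    · rcases fin_three_cases j with rfl | rfl | rfl
      · by_cases hax : a = x <;> simp [hax, pathGraph_adj]
      · by_cases hax : a = x <;> simp [hax, pathGraph_adj]
      · exact absurd rfl hb
    · rcases fin_three_cases i with rfl | rfl | rfl
      · by_cases hbx : b = x <;> simp [hbx, pathGraph_adj]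
      · by_cases hbx : b = x <;> simp [hbx, pathGraph_adj]
      · exact absurd rfl ha
    · rcases fin_three_cases i with rfl | rfl | rfl <;>
      rcases fin_three_cases j with rfl | rfl | rfl <;>
      first | exact absurd rfl ha | exact absurd rfl hb | simp [pathGraph_adj]

lemma not_connected_induce_ne_of_separates {G : SimpleGraph V} {v p q : V} (s : Set V)
    (hs : ∀ a b, G.Adj a b → a ∈ s → b ∉ s → a = v ∨ b = v) (hp : p ∈ s) (hq : q ∉ s)
    (hpv : p ≠ v) (hqv : q ≠ v) : ¬ (G.induce {w | w ≠ v}).Connected := by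
  intro h
  obtain ⟨walk⟩ := h.preconnected ⟨p, hpv⟩ ⟨q, hqv⟩
  obtain ⟨d, -, hd₁, hd₂⟩ := walk.exists_boundary_dart (Subtype.val ⁻¹' s) hp hq
  rcases hs _ _ d.adj hd₁ hd₂ with h | h
  · exact d.fst.2 h
  · exact d.snd.2 h

lemma eq_inr_two_or_exists_inl_of_connected {G : SimpleGraph V} {x y₀ : V} (hxy₀ : G.Adj x y₀)
    {v : V ⊕ Fin 3} (hv : ((attachPath G x 3).induce {w | w ≠ v}).Connected) :
    v = .inr 2 ∨ ∃ u, x ≠ u ∧ v = .inl u := by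
  have hcross : ∀ a b, (attachPath G x 3).Adj a b → a ∈ ({.inr 1, .inr 2} : Set _)ᶜ →
      b ∉ ({.inr 1, .inr 2} : Set _)ᶜ → a = .inr 0 ∧ b = .inr 1 := by
    rintro (a | i) (b | j) hab ha hb <;> simp_all [pathGraph_adj]
    fin_cases i <;> fin_cases j <;> simp_all
  rcases v with u | i
  · by_cases hxu : x = u
    · subst hxu
      refine absurd hv (not_connected_induce_ne_of_separates {w | w.isLeft} ?_
        (p := .inl y₀) (q := .inr 0) rfl (by simp) (by simpa using hxy₀.ne') (by simp))
      rintro (a | i) (b | j) hab ha hb <;> simp_all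
    · exact .inr ⟨u, hxu, rfl⟩
  · fin_cases i
    · exact absurd hv (not_connected_induce_ne_of_separates _
        (fun a b hab ha hb => .inl (hcross a b hab ha hb).1) (p := .inl x) (q := .inr 2)
        (by simp) (by simp) (by simp) (by simp))
    · exact absurd hv (not_connected_induce_ne_of_separates _
        (fun a b hab ha hb => .inr (hcross a b hab ha hb).2) (p := .inl x) (q := .inr 2)
        (by simp) (by simp) (by simp) (by simp))
    · exact .inl rfl

lemma connected_induce_ne_of_isLeafV {G : SimpleGraph V} (hG : G.Connected) {x : V}
    (hx : IsLeafV G x) : (G.induce {w | w ≠ x}).Connected := by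
  obtain ⟨y₀, hxy₀, hy₀⟩ := hx
  refine (connected_iff _).2
    ⟨hG.preconnected.induce_of_degree_eq_one fun v hv => ?_, ⟨⟨y₀, hxy₀.ne'⟩⟩⟩
  obtain rfl : v = x := not_not.1 hv
  exact fun a ha b hb => (hy₀ a ha).trans (hy₀ b hb).symm

/-- appending a path on three vertices to a leaf preserves (in both
directions) eternal distance-2 domination criticality. -/
theorem critical_extension_P3 {V : Type u} [Fintype V] (G : SimpleGraph V) (hG : G.IsTree)
    (x : V) (hx : IsLeafV G x) :
    EternalCritical (attachPath G x 3) ↔ EternalCritical G := by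
  classical
  have hGx := connected_induce_ne_of_isLeafV hG.connected hx
  obtain ⟨y₀, hxy₀, hy₀⟩ := hx
  let eLast := attachPathInduceNeLast G (fun v => ⟨hy₀ v, fun h => h ▸ hxy₀⟩) hxy₀.ne'
  let eInl (u : V) (hxu : x ≠ u) := attachPathInduceNeInl G hxu 3
  rw [EternalCritical, EternalCritical, eternalNum_attachPath_three]
  constructor
  · intro h u hu
    by_cases hxu : x = u
    · subst hxu
      have hlt := h (.inr 2) (eLast.connected_iff.2 (attachPath_connected_iff.2 hu))
      rwa [eternalNum_congr eLast, eternalNum_attachPath_three, Nat.add_lt_add_iff_right] at hlt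
    · have hlt := h (.inl u) ((eInl u hxu).connected_iff.2 (attachPath_connected_iff.2 hu))
      rwa [eternalNum_congr (eInl u hxu), eternalNum_attachPath_three,
        Nat.add_lt_add_iff_right] at hlt
  · intro h v hv
    rcases eq_inr_two_or_exists_inl_of_connected hxy₀ hv with rfl | ⟨u, hxu, rfl⟩
    · rw [eternalNum_congr eLast, eternalNum_attachPath_three]
      exact Nat.add_lt_add_right (h x hGx) 1
    · rw [eternalNum_congr (eInl u hxu), eternalNum_attachPath_three]
      exact Nat.add_lt_add_right
        (h u (attachPath_connected_iff.1 ((eInl u hxu).connected_iff.1 hv))) 1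

end EternalDom
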